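/- arXiv:1509.03153 — 6 statements merged into one kernel-verified Lean document; each statement's English description precedes it below -/
import Mathlib

section
/- Let G be a strongly connected multidigraph with incidence matrix C (rows indexed by nodes, columns by edges, with entry 1 if the node is the target of the edge and not its source, −1 if the node is the source and not the target, 0 otherwise). Let H be the matrix whose rows are the indicator vectors ν_σ ∈ {0,1}^E of the elementary cycles σ of G. Then ker H = im Cᵗ. -/
/-! A weighting `x` of the edges lies in `im Cᵀ` iff it is a potential difference
`x e = f (tgt e) - f (src e)`, and in `ker H` iff it sums to zero along every elementary cycle.
Potential differences telescope to zero along every closed walk. Conversely, if `x` vanishes on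
elementary cycles, then cutting an elementary cycle out of a walk does not change its weight, so
every closed walk has the weight of an elementary cycle or of the empty walk, namely zero.
In a strongly connected graph, the weight of a walk from a fixed root to `v` is then independent
of the walk and is a potential for `x`. -/

/-- A multidigraph: a set of nodes `V`, a set of edges `E`, and source/target maps. -/
structure Multidigraph (V E : Type*) where
  src : E → V
  tgt : E → V

namespace Multidigraph

variable {V E : Type*}

/-- One-step edge relation using only the edges in `τ`. -/
def Rel (G : Multidigraph V E) (τ : Set E) (a b : V) : Prop :=
  ∃ e ∈ τ, G.src e = a ∧ G.tgt e = b

/-- Undirected (symmetrized) one-step relation. -/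
def URel (G : Multidigraph V E) (a b : V) : Prop :=
  G.Rel Set.univ a b ∨ G.Rel Set.univ b a

/-- Node set of the (weakly) connected component containing `v`. -/
def component (G : Multidigraph V E) (v : V) : Set V :=
  {w | Relation.ReflTransGen G.URel v w}

/-- `τ` is a spanning tree of the subgraph of `G` induced on the node set `W`,
rooted at `r`: all edges stay inside `W`, every non-root node of `W` has exactly
one outgoing edge in `τ`, the root has none, and every node of `W` reaches `r`
through `τ`. -/
def IsSpanningTreeOn (G : Multidigraph V E) (W : Set V) (τ : Finset E) (r : V) : Prop :=
  (∀ e ∈ τ, G.src e ∈ W ∧ G.tgt e ∈ W) ∧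
  (∀ v ∈ W, v ≠ r → ∃! e, e ∈ τ ∧ G.src e = v) ∧
  (∀ e ∈ τ, G.src e ≠ r) ∧
  (∀ v ∈ W, Relation.ReflTransGen (G.Rel (τ : Set E)) v r)

/-- Spanning tree of `G` rooted at `r`. -/
def IsSpanningTree (G : Multidigraph V E) (τ : Finset E) (r : V) : Prop :=
  G.IsSpanningTreeOn Set.univ τ r

/-- A cycle: a nonempty closed directed path with pairwise distinct nodes. -/
def IsCycle (G : Multidigraph V E) (l : List E) : Prop :=
  l ≠ [] ∧ (l.map G.src).Nodup ∧
  l.Chain' (fun a b => G.tgt a = G.src b) ∧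
  ∀ h : l ≠ [], G.tgt (l.getLast h) = G.src (l.head h)

def StronglyConnected (G : Multidigraph V E) : Prop :=
  ∀ a b : V, Relation.ReflTransGen (G.Rel Set.univ) a b

def Connected (G : Multidigraph V E) : Prop :=
  ∀ a b : V, Relation.ReflTransGen G.URel a b

/-- Incidence matrix of a multidigraph. -/
def incidence [DecidableEq V] (G : Multidigraph V E) : Matrix V E ℝ := fun v e =>
  if G.tgt e = v ∧ G.src e ≠ v then 1
  else if G.src e = v ∧ G.tgt e ≠ v then (-1 : ℝ) else 0

end Multidigraph

open scoped Classical

/-- The cycle-indicator matrix `H`: rows indexed by the (elementary) cycles of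
`G`, columns by edges; entry 1 if the edge belongs to the cycle, 0 otherwise. -/
noncomputable def cycleMatrix {V E : Type} (G : Multidigraph V E) :
    Matrix {l : List E // G.IsCycle l} E ℝ :=
  fun σ e => if e ∈ σ.val then 1 else 0

open scoped Matrix

namespace Multidigraph

variable {V E : Type*}

inductive IsWalk (G : Multidigraph V E) : V → V → List E → Prop
  | nil (a : V) : IsWalk G a a []
  | cons {a b : V} {e : E} {l : List E} :
      G.src e = a → IsWalk G (G.tgt e) b l → IsWalk G a b (e :: l)

variable {G : Multidigraph V E} {a b c : V} {e : E} {l l₁ l₂ : List E}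

theorem IsWalk.src_eq (h : G.IsWalk a b (e :: l)) : G.src e = a := by
  cases h with
  | cons he _ => exact he

theorem IsWalk.append (h₁ : G.IsWalk a b l₁) (h₂ : G.IsWalk b c l₂) :
    G.IsWalk a c (l₁ ++ l₂) := by
  induction h₁ with
  | nil => exact h₂
  | cons he _ ih => exact .cons he (ih h₂)

theorem IsWalk.of_append (h : G.IsWalk a c (l₁ ++ l₂)) :
    ∃ b, G.IsWalk a b l₁ ∧ G.IsWalk b c l₂ := by
  induction l₁ generalizing a with
  | nil => exact ⟨a, .nil a, h⟩
  | cons e l ih =>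
    cases h with
    | cons he hw =>
      obtain ⟨b, hb₁, hb₂⟩ := ih hw
      exact ⟨b, .cons he hb₁, hb₂⟩

theorem IsWalk.isChain (h : G.IsWalk a b l) : l.IsChain (fun e e' => G.tgt e = G.src e') := by
  induction h with
  | nil => exact List.IsChain.nil
  | @cons _ _ _ l _ hw ih =>
    cases l with
    | nil => exact List.IsChain.singleton _
    | cons e' _ => exact List.IsChain.cons_cons hw.src_eq.symm ih

theorem IsWalk.tgt_getLast (h : G.IsWalk a b l) (hl : l ≠ []) : G.tgt (l.getLast hl) = b := by
  induction h with
  | nil => contradiction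
  | @cons _ _ _ l _ hw ih =>
    cases l with
    | nil => cases hw; rfl
    | cons e' l' => rw [List.getLast_cons (List.cons_ne_nil e' l')]; exact ih _

theorem isWalk_of_isChain (hl : l ≠ []) (hc : l.IsChain (fun e e' => G.tgt e = G.src e')) :
    G.IsWalk (G.src (l.head hl)) (G.tgt (l.getLast hl)) l := by
  induction l with
  | nil => contradiction
  | cons e l ih =>
    cases l with
    | nil => exact .cons rfl (.nil _)
    | cons e' l' =>
      rcases hc with _ | _ | ⟨hee', hc'⟩
      rw [List.getLast_cons (List.cons_ne_nil e' l')]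
      exact .cons rfl (hee' ▸ ih (List.cons_ne_nil e' l') hc')

theorem isCycle_iff :
    G.IsCycle l ↔ l ≠ [] ∧ (l.map G.src).Nodup ∧ ∃ a, G.IsWalk a a l := by
  constructor
  · rintro ⟨hl, hnd, hc, hclosed⟩
    exact ⟨hl, hnd, _, hclosed hl ▸ isWalk_of_isChain hl hc⟩
  · rintro ⟨hl, hnd, a, hw⟩
    refine ⟨hl, hnd, hw.isChain, fun hl => ?_⟩
    obtain ⟨e, l, rfl⟩ := List.exists_cons_of_ne_nil hl
    rw [hw.tgt_getLast, List.head_cons, hw.src_eq]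

theorem StronglyConnected.exists_isWalk (hG : G.StronglyConnected) (a b : V) :
    ∃ l, G.IsWalk a b l := by
  induction hG a b with
  | refl => exact ⟨[], .nil a⟩
  | tail _ hbc ih =>
    obtain ⟨l, hl⟩ := ih
    obtain ⟨e, -, rfl, rfl⟩ := hbc
    exact ⟨l ++ [e], hl.append (.cons rfl (.nil _))⟩

section Weights

variable {M : Type*} [AddCommGroup M]

theorem IsWalk.sum_map_sub (f : V → M) (h : G.IsWalk a b l) :
    (l.map fun e => f (G.tgt e) - f (G.src e)).sum = f b - f a := by
  induction h with
  | nil => simp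
  | cons he _ ih =>
    subst he
    rw [List.map_cons, List.sum_cons, ih]
    abel

variable {x : E → M} (hx : ∀ l, G.IsCycle l → (l.map x).sum = 0)
include hx

/-- Whenever the walk `e :: p` revisits its starting node, the part before the revisit is a
cycle and can be dropped. -/
theorem IsWalk.exists_nodup_sum_eq (h : G.IsWalk a b l) :
    ∃ p, G.IsWalk a b p ∧ (p.map G.src).Nodup ∧ (p.map x).sum = (l.map x).sum := by
  induction h with
  | nil a => exact ⟨[], .nil a, List.nodup_nil, rfl⟩
  | @cons a b e l he _ ih =>
    obtain ⟨p, hp, hnd, hsum⟩ := ih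
    by_cases ha : a ∈ p.map G.src
    · obtain ⟨e', he'p, rfl⟩ := List.mem_map.1 ha
      obtain ⟨s, t, rfl⟩ := List.append_of_mem he'p
      obtain ⟨m, hs, ht⟩ := hp.of_append
      obtain rfl := ht.src_eq
      simp only [List.map_append, List.map_cons, List.nodup_append, List.nodup_cons,
        List.mem_cons] at hnd
      have hcycle : G.IsCycle (e :: s) := isCycle_iff.2
        ⟨List.cons_ne_nil e s, List.nodup_cons.2 ⟨he ▸ fun hm => hnd.2.2 _ hm _ (.inl rfl) rfl,
          hnd.1⟩, _, .cons he hs⟩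
      refine ⟨e' :: t, ht, List.nodup_cons.2 hnd.2.1, ?_⟩
      have hcycle_sum := hx _ hcycle
      simp only [List.map_cons, List.sum_cons, List.map_append, List.sum_append]
        at hcycle_sum hsum ⊢
      rw [← hsum, ← add_assoc, hcycle_sum, zero_add]
    · exact ⟨e :: p, .cons he hp, List.nodup_cons.2 ⟨he ▸ ha, hnd⟩, by simp [hsum]⟩

theorem IsWalk.sum_map_eq_zero_of_closed (h : G.IsWalk a a l) : (l.map x).sum = 0 := by
  obtain ⟨p, hp, hnd, hsum⟩ := h.exists_nodup_sum_eq hx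
  rw [← hsum]
  rcases eq_or_ne p [] with rfl | hne
  · rfl
  · exact hx p (isCycle_iff.2 ⟨hne, hnd, a, hp⟩)

/-- The potential of `v` is the weight of a chosen walk from a fixed root to `v`. -/
theorem StronglyConnected.exists_potential (hG : G.StronglyConnected) :
    ∃ f : V → M, ∀ e, x e = f (G.tgt e) - f (G.src e) := by
  rcases isEmpty_or_nonempty V with hV | ⟨⟨r⟩⟩
  · exact ⟨0, fun e => isEmptyElim (G.src e)⟩
  choose w hw using hG.exists_isWalk r
  refine ⟨fun v => ((w v).map x).sum, fun e => ?_⟩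
  obtain ⟨q, hq⟩ := hG.exists_isWalk (G.tgt e) r
  have h₁ := ((hw (G.src e)).append (.cons rfl hq)).sum_map_eq_zero_of_closed hx
  have h₂ := ((hw (G.tgt e)).append hq).sum_map_eq_zero_of_closed hx
  simp only [List.map_append, List.map_cons, List.sum_append, List.sum_cons] at h₁ h₂
  beta_reduce
  rw [eq_sub_iff_add_eq, eq_neg_of_add_eq_zero_left h₂, eq_neg_iff_add_eq_zero, ← h₁]
  abel

end Weights

theorem incidence_apply [DecidableEq V] (v : V) (e : E) :
    G.incidence v e = (if G.tgt e = v then 1 else 0) - (if G.src e = v then 1 else 0) := by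
  unfold incidence
  split_ifs <;> simp_all

theorem incidence_transpose_mulVec_apply [Fintype V] [DecidableEq V] (f : V → ℝ) (e : E) :
    (G.incidenceᵀ *ᵥ f) e = f (G.tgt e) - f (G.src e) := by
  simp only [Matrix.mulVec, dotProduct, Matrix.transpose_apply, incidence_apply, sub_mul,
    ite_mul, one_mul, zero_mul, Finset.sum_sub_distrib, Finset.sum_ite_eq, Finset.mem_univ,
    if_true]

theorem mem_range_incidence_transpose_iff [Fintype V] [DecidableEq V] (x : E → ℝ) :
    x ∈ LinearMap.range G.incidenceᵀ.mulVecLin ↔ ∃ f : V → ℝ, ∀ e, x e = f (G.tgt e) - f (G.src e) := by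
  simp only [LinearMap.mem_range, Matrix.mulVecLin_apply, funext_iff,
    incidence_transpose_mulVec_apply, eq_comm]

end Multidigraph

theorem cycleMatrix_mulVec_apply {V E : Type} [Fintype E] (G : Multidigraph V E) (x : E → ℝ)
    (σ : {l : List E // G.IsCycle l}) : (cycleMatrix G *ᵥ x) σ = (σ.1.map x).sum := by
  have hnd : σ.1.Nodup := σ.2.2.1.of_map G.src
  simp only [Matrix.mulVec, dotProduct, cycleMatrix, ite_mul, one_mul, zero_mul]
  rw [← Finset.sum_filter, ← List.sum_toFinset x hnd]
  congr 1
  ext e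
  simp

theorem mem_ker_cycleMatrix_iff {V E : Type} [Fintype E] (G : Multidigraph V E) (x : E → ℝ) :
    x ∈ LinearMap.ker (cycleMatrix G).mulVecLin ↔ ∀ l, G.IsCycle l → (l.map x).sum = 0 := by
  simp only [LinearMap.mem_ker, Matrix.mulVecLin_apply, funext_iff, Pi.zero_apply,
    cycleMatrix_mulVec_apply, Subtype.forall]

/-- For a strongly connected multidigraph, `ker H = im Cᵗ`. -/
theorem stmt1 {V E : Type} [Fintype V] [Fintype E] [DecidableEq V]
    (G : Multidigraph V E) (hG : G.StronglyConnected) :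
    LinearMap.ker (Matrix.mulVecLin (cycleMatrix G))
      = LinearMap.range (Matrix.mulVecLin (G.incidence).transpose) := by
  ext x
  rw [mem_ker_cycleMatrix_iff, Multidigraph.mem_range_incidence_transpose_iff]
  constructor
  · exact fun hx => hG.exists_potential hx
  · rintro ⟨f, hf⟩ l hl
    obtain ⟨-, -, a, hw⟩ := Multidigraph.isCycle_iff.1 hl
    rw [List.map_congr_left fun e _ => hf e, hw.sum_map_sub, sub_self]
end

section
/- Let G be a multidigraph and σ a cycle in G contained in a connected component G_H. For an edge e of σ, define Γ_e(σ) as the set of subgraphs τ ∪ {e} where τ is a spanning tree of G_H rooted at s(e) that contains σ∖{e}. Then for any two edges e, e' of σ, Γ_e(σ) = Γ_{e'}(σ); both equal the set of subgraphs γ of G_H such that γ contains σ and γ is of the form τ ∪ {f} for some edge f and spanning tree τ of G_H rooted at s(f). -/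
open scoped Classical

namespace Stmt3Aux

open Multidigraph Relation List

variable {V E : Type} (G : Multidigraph V E)

lemma rel_mono {s t : Set E} (h : s ⊆ t) {a b : V} (hr : G.Rel s a b) : G.Rel t a b := by
  obtain ⟨e, he, h1, h2⟩ := hr
  exact ⟨e, h he, h1, h2⟩

lemma rtg_mono {s t : Set E} (h : s ⊆ t) {a b : V}
    (hr : Relation.ReflTransGen (G.Rel s) a b) : Relation.ReflTransGen (G.Rel t) a b :=
  Relation.ReflTransGen.mono (fun _ _ => rel_mono G h) _ _ hr

lemma path_along : ∀ (l : List E) (hl : l ≠ []),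
    l.Chain' (fun a b => G.tgt a = G.src b) → ∀ g ∈ l,
    Relation.ReflTransGen (G.Rel {x | x ∈ l}) (G.src g) (G.tgt (l.getLast hl))
  | [], hl => by simp at hl
  | [a], _ => by
      intro _ g hg
      simp only [List.mem_singleton] at hg
      subst hg
      simp only [List.getLast_singleton]
      exact ReflTransGen.single ⟨g, by simp, rfl, rfl⟩
  | a :: b :: t, _ => by
      intro hch g hg
      unfold List.Chain' at hch
      rw [List.isChain_cons_cons] at hch
      have hsub : {x | x ∈ b :: t} ⊆ {x | x ∈ a :: b :: t} := by
        intro x hx; simp only [Set.mem_setOf_eq, List.mem_cons] at *; tauto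
      have hlast : (a :: b :: t).getLast (by simp) = (b :: t).getLast (by simp) :=
        List.getLast_cons (by simp)
      rw [hlast]
      rcases List.mem_cons.mp hg with rfl | hg
      · have step : G.Rel {x | x ∈ g :: b :: t} (G.src g) (G.src b) :=
          ⟨g, by simp, rfl, hch.1⟩
        exact ReflTransGen.head step
          (rtg_mono G hsub (path_along (b :: t) (by simp) hch.2 b (by simp)))
      · exact rtg_mono G hsub (path_along (b :: t) (by simp) hch.2 g hg)

lemma cycle_rotate {σ : List E} (hσ : G.IsCycle σ) {e : E} (he : e ∈ σ) :
    ∃ l : List E, G.IsCycle (e :: l) ∧ ∀ g, g ∈ e :: l ↔ g ∈ σ := by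
  obtain ⟨hne, hnd, hch, hwrap⟩ := hσ
  obtain ⟨l₁, l₂, rfl⟩ := List.append_of_mem he
  refine ⟨l₂ ++ l₁, ?_, ?_⟩
  · have hperm : (l₁ ++ e :: l₂) ~ e :: (l₂ ++ l₁) :=
      List.perm_middle.trans (List.Perm.cons e (List.perm_append_comm))
    have hch' := (List.isChain_append (l₁ := l₁) (l₂ := e :: l₂)).mp hch
    refine ⟨by simp, (hperm.map G.src).nodup hnd, ?_, ?_⟩
    · show List.Chain' _ ((e :: l₂) ++ l₁)
      unfold List.Chain'
      rw [List.isChain_append]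
      refine ⟨hch'.2.1, hch'.1, ?_⟩
      intro x hx y hy
      rcases l₁ with _ | ⟨a, t⟩
      · simp at hy
      · have hy' : a = y := by simpa using hy
        have hx' : x = (e :: l₂).getLast (by simp) := by
          rw [List.getLast?_eq_getLast (l := e :: l₂) (by simp)] at hx
          simpa using hx.symm
        have hg : ((a :: t) ++ e :: l₂).getLast (by simp) = (e :: l₂).getLast (by simp) :=
          List.getLast_append_of_ne_nil _ (by simp)
        have hw := hwrap (by simp)
        rw [show ((a :: t) ++ e :: l₂).head (by simp) = a from rfl, hg] at hw
        rw [hx', ← hy']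
        exact hw
    · intro h
      rcases l₁ with _ | ⟨a, t⟩
      · simp only [List.append_nil] at *
        have := hwrap (by simp)
        simpa using this
      · have h1 : (e :: (l₂ ++ a :: t)).getLast h = (a :: t).getLast (by simp) := by
          have h2 : (e :: (l₂ ++ a :: t)).getLast? = (a :: t).getLast? := by
            have := List.getLast?_append_cons (e :: l₂) a t
            simpa using this
          exact Option.some_injective _
            ((List.getLast?_eq_getLast h).symm.trans
              (h2.trans (List.getLast?_eq_getLast (l := a :: t) (by simp))))
        rw [h1]
        have := hch'.2.2
        simp only [List.head_cons]
        have hx : (a :: t).getLast (by simp) ∈ (a :: t).getLast? := by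
          simp [List.getLast?_eq_getLast]
        exact this _ hx e (by simp)
  · intro g; simp only [List.mem_cons, List.mem_append]; tauto


lemma cyc_next {σ : List E} (hσ : G.IsCycle σ) {g : E} (hg : g ∈ σ) :
    ∃ g' ∈ σ, G.tgt g = G.src g' := by
  obtain ⟨l, hc, hmem⟩ := cycle_rotate G hσ hg
  rcases l with _ | ⟨b, t⟩
  · refine ⟨g, hg, ?_⟩
    have := hc.2.2.2 (by simp)
    simpa using this
  · refine ⟨b, (hmem b).mp (by simp), (List.isChain_cons_cons.mp hc.2.2.1).1⟩

lemma key [DecidableEq E] (W : Set V)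
    (hW : ∀ g : E, G.src g ∈ W → G.tgt g ∈ W)
    {σ : List E} (hσ : G.IsCycle σ) {f : E} {τ : Finset E}
    (hτ : G.IsSpanningTreeOn W τ (G.src f))
    (hσγ : ∀ g ∈ σ, g ∈ insert f τ)
    (hfW : G.src f ∈ W)
    {e : E} (he : e ∈ σ) :
    G.IsSpanningTreeOn W ((insert f τ).erase e) (G.src e) := by
  obtain ⟨hτW, huniq, hroot, hreach⟩ := hτ
  have hfτ : f ∉ τ := fun h => hroot f h rfl
  have hγW : ∀ g ∈ insert f τ, G.src g ∈ W ∧ G.tgt g ∈ W := by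
    intro g hg
    rcases Finset.mem_insert.mp hg with rfl | hg
    · exact ⟨hfW, hW _ hfW⟩
    · exact hτW g hg
  have hγuniq : ∀ v ∈ W, ∃! g, g ∈ insert f τ ∧ G.src g = v := by
    intro v hv
    by_cases hvr : v = G.src f
    · subst hvr
      refine ⟨f, ⟨Finset.mem_insert_self f τ, rfl⟩, ?_⟩
      rintro g' ⟨hg', hs⟩
      rcases Finset.mem_insert.mp hg' with rfl | hg'
      · rfl
      · exact absurd hs (hroot g' hg')
    · obtain ⟨g, ⟨hgτ, hgs⟩, hgu⟩ := huniq v hv hvr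
      refine ⟨g, ⟨Finset.mem_insert_of_mem hgτ, hgs⟩, ?_⟩
      rintro g' ⟨hg', hs⟩
      rcases Finset.mem_insert.mp hg' with rfl | hg'
      · exact absurd hs.symm hvr
      · exact hgu g' ⟨hg', hs⟩
  have heγ : e ∈ insert f τ := hσγ e he
  have haW : G.src e ∈ W := (hγW e heγ).1
  have hσW : ∀ g ∈ σ, G.src g ∈ W := fun g hg => (hγW g (hσγ g hg)).1
  -- the "closing" edge f must lie on the cycle σ
  have hfσ : f ∈ σ := by
    by_contra hf
    have hστ : ∀ g ∈ σ, g ∈ τ := by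
      intro g hg
      rcases Finset.mem_insert.mp (hσγ g hg) with rfl | h
      · exact absurd hg hf
      · exact h
    have main : ∀ v, Relation.ReflTransGen (G.Rel (τ : Set E)) v (G.src f) →
        ∀ g ∈ σ, G.src g ≠ v := by
      intro v hv
      induction hv using Relation.ReflTransGen.head_induction_on with
      | refl => intro g hg; exact hroot g (hστ g hg)
      | @head a c step _ ih =>
        intro g hg hgv
        obtain ⟨h', hh'τ, hh's, hh't⟩ := step
        have haW' : a ∈ W := hgv ▸ hσW g hg
        have hanr : a ≠ G.src f := hgv ▸ hroot g (hστ g hg)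
        obtain ⟨w, hw, hu⟩ := huniq a haW' hanr
        have h1 : h' = w := hu h' ⟨hh'τ, hh's⟩
        have h2 : g = w := hu g ⟨hστ g hg, hgv⟩
        obtain ⟨g', hg', hgg'⟩ := cyc_next G hσ hg
        exact ih g' hg' (by rw [← hgg', h2, ← h1, hh't])
    exact main (G.src e) (hreach _ haW) e he rfl
  -- every source on σ reaches `src e` inside `γ.erase e`
  have hσreach : ∀ g ∈ σ,
      Relation.ReflTransGen (G.Rel (((insert f τ).erase e : Finset E) : Set E))
        (G.src g) (G.src e) := by
    obtain ⟨l, hc, hmem⟩ := cycle_rotate G hσ he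
    have hnd : (e :: l).Nodup := hc.2.1.of_map
    have hlsub : {x | x ∈ l} ⊆ (((insert f τ).erase e : Finset E) : Set E) := by
      intro x hx
      have hxσ : x ∈ σ := (hmem x).mp (List.mem_cons_of_mem _ hx)
      have hxe : x ≠ e := fun h => (List.nodup_cons.mp hnd).1 (h ▸ hx)
      simp only [Finset.coe_erase, Set.mem_diff, Finset.mem_coe, Set.mem_singleton_iff]
      exact ⟨hσγ x hxσ, hxe⟩
    intro g hg
    have hgel : g ∈ e :: l := (hmem g).mpr hg
    rcases List.mem_cons.mp hgel with rfl | hgl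
    · exact Relation.ReflTransGen.refl
    · have hlne : l ≠ [] := by rintro rfl; simp at hgl
      have hch : l.Chain' (fun a b => G.tgt a = G.src b) := hc.2.2.1.tail
      have hp := rtg_mono G hlsub (path_along G l hlne hch g hgl)
      have hlast : (e :: l).getLast (by simp) = l.getLast hlne := List.getLast_cons hlne
      have hwrap := hc.2.2.2 (by simp)
      rw [hlast, List.head_cons] at hwrap
      rwa [hwrap] at hp
  have hWreach : ∀ v ∈ W,
      Relation.ReflTransGen (G.Rel (((insert f τ).erase e : Finset E) : Set E))
        v (G.src e) := by
    have main2 : ∀ v, Relation.ReflTransGen (G.Rel (τ : Set E)) v (G.src f) →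
        Relation.ReflTransGen (G.Rel (((insert f τ).erase e : Finset E) : Set E))
          v (G.src e) := by
      intro v hv
      induction hv using Relation.ReflTransGen.head_induction_on with
      | refl => exact hσreach f hfσ
      | @head a c step _ ih =>
        obtain ⟨g, hgτ, hgs, hgt⟩ := step
        by_cases hge : g = e
        · subst hge; rw [← hgs]
        · refine Relation.ReflTransGen.head ⟨g, ?_, hgs, hgt⟩ ih
          simp only [Finset.coe_erase, Set.mem_diff, Finset.mem_coe, Set.mem_singleton_iff]
          exact ⟨Finset.mem_insert_of_mem hgτ, hge⟩
    exact fun v hv => main2 v (hreach v hv)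
  refine ⟨?_, ?_, ?_, hWreach⟩
  · intro g hg
    exact hγW g (Finset.mem_of_mem_erase hg)
  · intro v hv hva
    obtain ⟨g, ⟨hgγ, hgs⟩, hgu⟩ := hγuniq v hv
    have hge : g ≠ e := fun h => hva (h ▸ hgs).symm
    refine ⟨g, ⟨Finset.mem_erase.mpr ⟨hge, hgγ⟩, hgs⟩, ?_⟩
    rintro g' ⟨hg', hs'⟩
    exact hgu g' ⟨Finset.mem_of_mem_erase hg', hs'⟩
  · intro g hg hgs
    obtain ⟨hge, hgγ⟩ := Finset.mem_erase.mp hg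
    obtain ⟨w, hw, hu⟩ := hγuniq (G.src e) haW
    exact hge ((hu g ⟨hgγ, hgs⟩).trans (hu e ⟨heγ, rfl⟩).symm)

end Stmt3Aux

/-- `Γ_e(σ)`: subgraphs `τ ∪ {e}` where `τ` is a spanning tree of the induced
subgraph on `W` rooted at `s(e)` containing `σ ∖ {e}`. -/
def GammaE {V E : Type} [DecidableEq E] (G : Multidigraph V E) (W : Set V)
    (σ : List E) (e : E) : Set (Finset E) :=
  {γ | ∃ τ : Finset E, G.IsSpanningTreeOn W τ (G.src e) ∧
        (∀ f ∈ σ, f ≠ e → f ∈ τ) ∧ γ = insert e τ}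

/-- `Γ`: subgraphs of the form (spanning tree rooted at `s(e)`) ∪ {e}. -/
def GammaOn {V E : Type} [DecidableEq E] (G : Multidigraph V E) (W : Set V) :
    Set (Finset E) :=
  {γ | ∃ (e : E) (τ : Finset E), G.IsSpanningTreeOn W τ (G.src e) ∧ γ = insert e τ}

/-- `Γ_e(σ)` is independent of the chosen edge `e ∈ σ`, and equals
the set of elements of `Γ` (for the connected component containing `σ`) that
contain `σ`. -/
theorem stmt3 {V E : Type} [DecidableEq E] (G : Multidigraph V E)
    (σ : List E) (hσ : G.IsCycle σ) (e e' : E) (he : e ∈ σ) (he' : e' ∈ σ) :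
    GammaE G (G.component (G.src (σ.head hσ.1))) σ e
        = GammaE G (G.component (G.src (σ.head hσ.1))) σ e' ∧
    GammaE G (G.component (G.src (σ.head hσ.1))) σ e
        = {γ ∈ GammaOn G (G.component (G.src (σ.head hσ.1))) | ∀ f ∈ σ, f ∈ γ} := by
  set W := G.component (G.src (σ.head hσ.1)) with hWdef
  have hWcl : ∀ g : E, G.src g ∈ W → G.tgt g ∈ W := by
    intro g hg
    exact Relation.ReflTransGen.tail hg (Or.inl ⟨g, trivial, rfl, rfl⟩)
  have main : ∀ d ∈ σ, GammaE G W σ d = {γ ∈ GammaOn G W | ∀ f ∈ σ, f ∈ γ} := by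
    intro d hd
    ext γ
    simp only [GammaE, GammaOn, Set.mem_setOf_eq, Set.mem_sep_iff]
    constructor
    · rintro ⟨τ, hτ, hcontain, rfl⟩
      refine ⟨⟨d, τ, hτ, rfl⟩, ?_⟩
      intro g hg
      by_cases hgd : g = d
      · subst hgd; exact Finset.mem_insert_self g τ
      · exact Finset.mem_insert_of_mem (hcontain g hg hgd)
    · rintro ⟨⟨f, τ, hτ, rfl⟩, hcontain⟩
      have hfW : G.src f ∈ W := by
        have h0 : G.src (σ.head hσ.1) ∈ W := Relation.ReflTransGen.refl
        have hpath := hτ.2.2.2 _ h0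
        exact h0.trans (Relation.ReflTransGen.mono (fun x y hxy =>
          Or.inl (Stmt3Aux.rel_mono G (Set.subset_univ _) hxy)) _ _ hpath)
      have hkey := Stmt3Aux.key G W hWcl hσ hτ hcontain hfW hd
      have hdγ : d ∈ insert f τ := hcontain d hd
      exact ⟨(insert f τ).erase d, hkey,
        fun g hg hgd => Finset.mem_erase.mpr ⟨hgd, hcontain g hg⟩,
        (Finset.insert_erase hdγ).symm⟩
  exact ⟨(main e he).trans (main e' he').symm, main e he⟩
end

section
/- Let U be a noninteracting set of species in a reaction network, σ a cycle in the multidigraph G_U, and r̃_σ the reduced reaction with reactant y = Σ_{e∈σ} ζ(y_{r(e)}) and product y' = Σ_{e∈σ} ζ(y'_{r(e)}). Then each species U_i ∈ U that is a node of σ appears exactly once as the U-part of the reactant and exactly once as the U-part of the product of the reactions r(e), e ∈ σ; consequently Σ_{e∈σ} ρ(y'_{r(e)} − y_{r(e)}) = 0 whenever σ does not contain the node *. -/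
namespace List

variable {α β : Type*}

theorem map_cons_eq_map_append_of_isChain {f g : α → β} {c : β} :
    ∀ {a : α} {l : List α}, (a :: l).IsChain (fun x y => g x = f y) →
      g ((a :: l).getLast (cons_ne_nil a l)) = c → (a :: l).map g = l.map f ++ [c]
  | _, [], _, hlast => by simpa using hlast
  | a, b :: l, hchain, hlast => by
    obtain ⟨hab, hchain⟩ := isChain_cons_cons.mp hchain
    rw [map_cons, map_cons_eq_map_append_of_isChain hchain hlast, hab, map_cons, cons_append]

/-- A closed chain `g a₁ = f a₂, …, g aₙ = f a₁` makes `l.map g` a rotation of `l.map f`. -/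
theorem map_perm_map_of_isChain {f g : α → β} {l : List α} (hl : l ≠ [])
    (hchain : l.IsChain (fun x y => g x = f y)) (hwrap : g (l.getLast hl) = f (l.head hl)) :
    l.map g ~ l.map f := by
  obtain ⟨a, l, rfl⟩ := exists_cons_of_ne_nil hl
  rw [map_cons_eq_map_append_of_isChain hchain hwrap, map_cons]
  exact perm_append_singleton _ _

theorem sum_map_sub_eq_zero_of_perm {M : Type*} [AddCommGroup M] {f g : α → β} {l : List α}
    (h : l.map g ~ l.map f) (φ : β → M) : (l.map fun a => φ (g a) - φ (f a)).sum = 0 := by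
  have hsum := (h.map φ).sum_eq
  rw [map_map, map_map] at hsum
  rw [← Multiset.sum_coe, ← Multiset.map_coe, Multiset.sum_map_sub, Multiset.map_coe,
    Multiset.map_coe, Multiset.sum_coe, Multiset.sum_coe]
  exact sub_eq_zero.mpr hsum

end List

/-- In a cycle `σ` of `G_U` not containing `*`, each species of
`U` that is a node of `σ` appears exactly once as the `U`-part of a reactant
and exactly once as the `U`-part of a product among the reactions of the
cycle; consequently `Σ_{e∈σ} ρ(y'_{r(e)} − y_{r(e)}) = 0`. -/
theorem stmt6 {p m : ℕ} {R : Type}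
    (y y' : R → (Fin p → ℝ) × (Fin m → ℝ))
    (rs : List R) (hne : rs ≠ [])
    (f g : R → Fin m)
    (hf : ∀ r ∈ rs, (y r).2 = Pi.single (f r) 1)
    (hg : ∀ r ∈ rs, (y' r).2 = Pi.single (g r) 1)
    (hchain : rs.Chain' (fun a b => g a = f b))
    (hwrap : g (rs.getLast hne) = f (rs.head hne))
    (hnodup : (rs.map f).Nodup) :
    (∀ j : Fin m, j ∈ rs.map f →
      (rs.map f).count j = 1 ∧ (rs.map g).count j = 1) ∧
    (rs.map (fun r => (y' r).2 - (y r).2)).sum = 0 := by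
  have hperm := List.map_perm_map_of_isChain hne hchain hwrap
  refine ⟨fun j hj => ?_, ?_⟩
  · have hcount : (rs.map f).count j = 1 := List.count_eq_one_of_mem hnodup hj
    exact ⟨hcount, hperm.count_eq j ▸ hcount⟩
  · rw [List.map_congr_left fun r hr => by rw [hf r hr, hg r hr]]
    exact List.sum_map_sub_eq_zero_of_perm hperm fun j => Pi.single j 1
end

section
/- (Conservation laws, inclusion.) Let (C,R) be a reaction network on S = U^c ∪ U with a linearly eliminable set U, and let (C̃, R̃) be the reduced reaction network obtained by elimination of U, with stoichiometric subspaces S and S̃ respectively. Then ζ(S^⊥) ⊆ S̃^⊥, where ζ is the projection onto the coordinates of U^c. Concretely: if ω ∈ ℝ^n satisfies ω · (y'_r − y_r) = 0 for all r ∈ R, then ζ(ω) · (y'_{r̃} − y_{r̃}) = 0 for all r̃ ∈ R̃. -/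
open Matrix

namespace List

variable {R M : Type*} [AddCommGroup M]

theorem sum_map_sub (l : List R) (f g : R → M) :
    (l.map fun r => f r - g r).sum = (l.map f).sum - (l.map g).sum := by
  induction l with
  | nil => simp
  | cons a l ih => simp only [map_cons, sum_cons, ih]; abel

theorem sum_map_sub_of_isChain (f g : R → M) :
    ∀ {l : List R} (hne : l ≠ []), l.IsChain (fun a b => f a = g b) →
      (l.map fun r => f r - g r).sum = f (l.getLast hne) - g (l.head hne)
  | [_], _, _ => by simp
  | a :: b :: l, _, hl => by
    rw [isChain_cons_cons] at hl
    rw [map_cons, sum_cons, sum_map_sub_of_isChain f g (cons_ne_nil b l) hl.2, getLast_cons_cons,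
      head_cons, head_cons, ← hl.1]
    abel

theorem sum_map_sub_eq_zero_of_isChain (f g : R → M) {l : List R} (hne : l ≠ [])
    (hl : l.IsChain fun a b => f a = g b) (hclosed : f (l.getLast hne) = g (l.head hne)) :
    (l.map fun r => f r - g r).sum = 0 := by
  rw [sum_map_sub_of_isChain f g hne hl, hclosed, sub_self]

end List

theorem Matrix.dotProduct_list_sum {ι K : Type*} [Fintype ι] [NonUnitalNonAssocSemiring K]
    (u : ι → K) (l : List (ι → K)) : u ⬝ᵥ l.sum = (l.map (u ⬝ᵥ ·)).sum := by
  induction l with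
  | nil => simp
  | cons v l ih => simp [dotProduct_add, ih]

theorem dotProduct_fst_list_sum_eq_zero {ι κ K R : Type*} [Fintype ι] [Fintype κ]
    [NonUnitalNonAssocSemiring K] (ω : (ι → K) × (κ → K)) (v : R → (ι → K) × (κ → K))
    (l : List R) (hω : ∀ r ∈ l, ω.1 ⬝ᵥ (v r).1 + ω.2 ⬝ᵥ (v r).2 = 0)
    (hsnd : (l.map fun r => (v r).2).sum = 0) :
    ω.1 ⬝ᵥ (l.map fun r => (v r).1).sum = 0 :=
  calc ω.1 ⬝ᵥ (l.map fun r => (v r).1).sum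
      = ω.1 ⬝ᵥ (l.map fun r => (v r).1).sum + ω.2 ⬝ᵥ (l.map fun r => (v r).2).sum := by
        rw [hsnd, dotProduct_zero, add_zero]
    _ = (l.map fun r => ω.1 ⬝ᵥ (v r).1 + ω.2 ⬝ᵥ (v r).2).sum := by
        simp only [dotProduct_list_sum, List.map_map, List.sum_map_add, Function.comp_def]
    _ = 0 := List.sum_eq_zero fun x hx => by
        obtain ⟨r, hr, rfl⟩ := List.mem_map.mp hx
        exact hω r hr

/-- Conservation laws, inclusion: if `ω` is orthogonal to all
reaction vectors of the original network, then `ζ(ω)` is orthogonal to all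
reaction vectors of the reduced network: both those coming from reactions not
involving `U`, and those coming from cycles of `G_U`. -/
theorem stmt10 {p m : ℕ} {R : Type}
    (y y' : R → (Fin p → ℝ) × (Fin m → ℝ))
    (ω : (Fin p → ℝ) × (Fin m → ℝ))
    (hω : ∀ r : R,
      (∑ i, ω.1 i * ((y' r).1 i - (y r).1 i))
        + (∑ j, ω.2 j * ((y' r).2 j - (y r).2 j)) = 0) :
    (∀ r : R, (y r).2 = 0 → (y' r).2 = 0 →
        ∑ i, ω.1 i * ((y' r).1 i - (y r).1 i) = 0) ∧
    (∀ (rs : List R) (hne : rs ≠ []) (fsrc ftgt : R → Option (Fin m)),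
      (∀ r ∈ rs, (y r).2 = (match fsrc r with | some j => Pi.single j 1 | none => 0)) →
      (∀ r ∈ rs, (y' r).2 = (match ftgt r with | some j => Pi.single j 1 | none => 0)) →
      rs.Chain' (fun a b => ftgt a = fsrc b) →
      ftgt (rs.getLast hne) = fsrc (rs.head hne) →
      (rs.map fsrc).Nodup →
      ∑ i, ω.1 i *
          (((rs.map (fun r => (y' r).1)).sum i) - ((rs.map (fun r => (y r).1)).sum i)) = 0) := by
  refine ⟨fun r h h' => by simpa [h, h'] using hω r,
    fun rs hne fsrc ftgt hsrc htgt hch hcyc _ => ?_⟩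
  let e : Option (Fin m) → Fin m → ℝ := fun o => match o with
    | some j => Pi.single j 1
    | none => 0
  have hU : (rs.map fun r => (y' r).2 - (y r).2).sum = 0 := by
    rw [List.map_congr_left fun r hr => by rw [htgt r hr, hsrc r hr]]
    exact List.sum_map_sub_eq_zero_of_isChain (e ∘ ftgt) (e ∘ fsrc) hne
      (hch.imp fun _ _ h => congrArg e h) (congrArg e hcyc)
  have h := dotProduct_fst_list_sum_eq_zero ω (fun r => y' r - y r) rs (fun r _ => hω r) hU
  change ω.1 ⬝ᵥ ((rs.map fun r => (y' r).1).sum - (rs.map fun r => (y r).1).sum) = 0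
  rwa [← List.sum_map_sub]
end

section
/- (Splitting a rooted spanning tree at a cut node.) Let G be a connected multidigraph containing a node * such that removing * and its incident edges decomposes the remaining graph into two disjoint parts G_{H1} and G_{H2} with no edges between H1 and H2. Let N be a node of H1 ∪ {*}. Then the map (τ_1, τ_2) ↦ τ_1 ∪ τ_2 is a bijection between pairs consisting of a spanning tree τ_1 of G_{H1} (the subgraph induced by H1 ∪ {*}) rooted at N and a spanning tree τ_2 of G_{H2} (induced by H2 ∪ {*}) rooted at *, and the set of spanning trees of G rooted at N. Moreover π(τ_1 ∪ τ_2) = π(τ_1)π(τ_2) for any labeling π. -/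
theorem Finset.injOn_union_of_separated {α : Type*} [DecidableEq α] (p : α → Prop) :
    Set.InjOn (fun q : Finset α × Finset α => q.1 ∪ q.2)
      {q | (∀ x ∈ q.1, p x) ∧ ∀ x ∈ q.2, ¬ p x} := by
  classical
  have split {s t : Finset α} (hs : ∀ x ∈ s, p x) (ht : ∀ x ∈ t, ¬ p x) :
      (s ∪ t).filter p = s ∧ (s ∪ t).filter (¬ p ·) = t := by
    simp only [Finset.filter_union, Finset.filter_true_of_mem hs, Finset.filter_false_of_mem ht,
      Finset.filter_false_of_mem fun x hx => not_not.2 (hs x hx),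
      Finset.filter_true_of_mem ht, Finset.union_empty, Finset.empty_union, and_self]
  rintro ⟨s, t⟩ ⟨hs, ht⟩ ⟨s', t'⟩ ⟨hs', ht'⟩ (h : s ∪ t = s' ∪ t')
  obtain ⟨h₁, h₂⟩ := split hs ht
  obtain ⟨h₁', h₂'⟩ := split hs' ht'
  rw [h] at h₁ h₂
  exact Prod.ext (h₁.symm.trans h₁') (h₂.symm.trans h₂')

namespace Multidigraph

variable {V E : Type*} {G : Multidigraph V E}

theorem Rel.mono {τ τ' : Set E} (h : τ ⊆ τ') {a b : V} (hab : G.Rel τ a b) : G.Rel τ' a b :=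
  let ⟨e, he, hs, ht⟩ := hab
  ⟨e, h he, hs, ht⟩

theorem reflTransGen_rel_mono {τ τ' : Set E} (h : τ ⊆ τ') {a b : V}
    (hab : Relation.ReflTransGen (G.Rel τ) a b) : Relation.ReflTransGen (G.Rel τ') a b :=
  Relation.ReflTransGen.mono (fun _ _ => Rel.mono h) _ _ hab

section SpanningTree

variable {W W₁ W₂ S : Set V} {τ τ₁ τ₂ : Finset E} {r s : V}

theorem IsSpanningTreeOn.src_mem (hτ : G.IsSpanningTreeOn W τ r) {e : E} (he : e ∈ τ) :
    G.src e ∈ W \ {r} :=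
  ⟨(hτ.1 e he).1, hτ.2.2.1 e he⟩

theorem IsSpanningTreeOn.src_notMem_of_inter_subset (hτ : G.IsSpanningTreeOn W₂ τ s)
    (hW : W₁ ∩ W₂ ⊆ {s}) {e : E} (he : e ∈ τ) : G.src e ∉ W₁ := fun h₁ =>
  (hτ.src_mem he).2 (hW ⟨h₁, (hτ.src_mem he).1⟩)

theorem IsSpanningTreeOn.root_mem_of_closed (hτ : G.IsSpanningTreeOn W τ r) {v : V}
    (hvW : v ∈ W) (hvS : v ∈ S) (hS : ∀ e ∈ τ, G.src e ∈ S → G.tgt e ∈ S) : r ∈ S := by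
  have hreach := hτ.2.2.2 v hvW
  clear hτ
  induction hreach with
  | refl => exact hvS
  | tail _ hstep ih =>
    obtain ⟨e, he, rfl, rfl⟩ := hstep
    exact hS e he ih

theorem IsSpanningTreeOn.tgt_notMem (hτ : G.IsSpanningTreeOn W τ r) {e : E} (he : e ∈ τ)
    (hsW : G.src e ∈ W) (hsS : G.src e ∈ S) (hr : r ∉ S)
    (hS : ∀ f ∈ τ, G.src f ∈ S \ {G.src e} → G.tgt f ∈ S) : G.tgt e ∉ S := by
  refine fun ht => hr (hτ.root_mem_of_closed hsW hsS fun f hf hfS => ?_)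
  by_cases hfe : G.src f = G.src e
  · obtain ⟨g, -, hg⟩ := hτ.2.1 _ hsW (hτ.2.2.1 e he)
    rwa [hg f ⟨hf, hfe⟩, ← hg e ⟨he, rfl⟩]
  · exact hS f hf ⟨hfS, hfe⟩

theorem IsSpanningTreeOn.union [DecidableEq E] (h₁ : G.IsSpanningTreeOn W₁ τ₁ r)
    (h₂ : G.IsSpanningTreeOn W₂ τ₂ s) (hr : r ∈ W₁) (hW : W₁ ∩ W₂ = {s}) :
    G.IsSpanningTreeOn (W₁ ∪ W₂) (τ₁ ∪ τ₂) r := by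
  have hs : s ∈ W₁ := (hW.symm ▸ rfl : s ∈ W₁ ∩ W₂).1
  have hsrc₂ {e : E} (he : e ∈ τ₂) : G.src e ∉ W₁ :=
    h₂.src_notMem_of_inter_subset hW.subset he
  refine ⟨?_, ?_, ?_, ?_⟩
  · intro e he
    rcases Finset.mem_union.1 he with he | he
    · exact ⟨Or.inl (h₁.1 e he).1, Or.inl (h₁.1 e he).2⟩
    · exact ⟨Or.inr (h₂.1 e he).1, Or.inr (h₂.1 e he).2⟩
  · intro v hv hvr
    by_cases hv₁ : v ∈ W₁
    · obtain ⟨e, ⟨he, hev⟩, huniq⟩ := h₁.2.1 v hv₁ hvr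
      refine ⟨e, ⟨Finset.mem_union_left _ he, hev⟩, fun f ⟨hf, hfv⟩ => ?_⟩
      rcases Finset.mem_union.1 hf with hf | hf
      · exact huniq f ⟨hf, hfv⟩
      · exact absurd (hfv ▸ hv₁) (hsrc₂ hf)
    · have hv₂ : v ∈ W₂ := hv.resolve_left hv₁
      obtain ⟨e, ⟨he, hev⟩, huniq⟩ := h₂.2.1 v hv₂ (by rintro rfl; exact hv₁ hs)
      refine ⟨e, ⟨Finset.mem_union_right _ he, hev⟩, fun f ⟨hf, hfv⟩ => ?_⟩
      rcases Finset.mem_union.1 hf with hf | hf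
      · exact absurd (hfv ▸ (h₁.1 f hf).1) hv₁
      · exact huniq f ⟨hf, hfv⟩
  · intro e he
    rcases Finset.mem_union.1 he with he | he
    · exact h₁.2.2.1 e he
    · exact fun h => hsrc₂ he (h ▸ hr)
  · rintro v (hv | hv)
    · exact reflTransGen_rel_mono (by simp) (h₁.2.2.2 v hv)
    · exact (reflTransGen_rel_mono (by simp) (h₂.2.2.2 v hv)).trans
        (reflTransGen_rel_mono (by simp) (h₁.2.2.2 s hs))

/-- Walking towards `r` from a node of `S`, one must pass through `s` before leaving `S`. -/
theorem IsSpanningTreeOn.reflTransGen_restrict [DecidablePred (· ∈ S \ {s})]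
    (hτ : G.IsSpanningTreeOn W τ r) (hr : r ∉ S \ {s})
    (hS : ∀ e ∈ τ, G.src e ∈ S \ {s} → G.tgt e ∈ S) {v : V} (hvW : v ∈ W) (hvS : v ∈ S) :
    Relation.ReflTransGen (G.Rel ({e ∈ τ | G.src e ∈ S \ {s}} : Finset E)) v s := by
  have hreach := hτ.2.2.2 v hvW
  clear hvW
  induction hreach using Relation.ReflTransGen.head_induction_on with
  | refl =>
    have hrs : r = s := by_contra fun hrs => hr ⟨hvS, hrs⟩
    rw [hrs]
  | head hstep _ ih =>
    obtain ⟨e, he, rfl, rfl⟩ := hstep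
    by_cases hes : G.src e = s
    · rw [hes]
    · have hS' : G.src e ∈ S \ {s} := ⟨hvS, hes⟩
      exact .head ⟨e, Finset.mem_filter.2 ⟨he, hS'⟩, rfl, rfl⟩ (ih (hS e he hS'))

theorem IsSpanningTreeOn.restrict [DecidablePred (· ∈ S \ {s})]
    (hτ : G.IsSpanningTreeOn W τ r) (hSW : S ⊆ W) (hr : r ∉ S \ {s})
    (hS : ∀ e ∈ τ, G.src e ∈ S \ {s} → G.tgt e ∈ S) :
    G.IsSpanningTreeOn S {e ∈ τ | G.src e ∈ S \ {s}} s := by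
  refine ⟨fun e he => ?_, fun v hv hvs => ?_, fun e he => (Finset.mem_filter.1 he).2.2,
    fun v hv => hτ.reflTransGen_restrict hr hS (hSW hv) hv⟩
  · obtain ⟨he, hS'⟩ := Finset.mem_filter.1 he
    exact ⟨hS'.1, hS e he hS'⟩
  · have hv' : v ∈ S \ {s} := ⟨hv, hvs⟩
    obtain ⟨e, ⟨he, rfl⟩, huniq⟩ := hτ.2.1 v (hSW hv) (fun h => hr (h ▸ hv'))
    exact ⟨e, ⟨Finset.mem_filter.2 ⟨he, hv'⟩, rfl⟩,
      fun f ⟨hf, hfv⟩ => huniq f ⟨(Finset.mem_filter.1 hf).1, hfv⟩⟩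

theorem IsSpanningTreeOn.exists_union_eq [DecidableEq E]
    (hτ : G.IsSpanningTreeOn (W₁ ∪ W₂) τ r) (hr : r ∈ W₁) (hW : W₁ ∩ W₂ = {s})
    (hS₁ : ∀ e ∈ τ, G.src e ∈ W₁ \ {s} → G.tgt e ∈ W₁)
    (hS₂ : ∀ e ∈ τ, G.src e ∈ W₂ \ {s} → G.tgt e ∈ W₂) :
    ∃ τ₁ τ₂, G.IsSpanningTreeOn W₁ τ₁ r ∧ G.IsSpanningTreeOn W₂ τ₂ s ∧ τ₁ ∪ τ₂ = τ := by
  classical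
  have hs : s ∈ W₁ ∩ W₂ := hW.symm ▸ rfl
  have hr₂ : r ∉ W₂ \ {s} := fun h => h.2 (hW.subset ⟨hr, h.1⟩)
  have hS₁' : ∀ e ∈ τ, G.src e ∈ W₁ \ {r} → G.tgt e ∈ W₁ := by
    intro e he hsrc
    by_cases hes : G.src e = s
    · -- otherwise `W₂` would be closed under tree edges, hence contain `r`
      have hr₂' : r ∉ W₂ := fun h => hsrc.2 (hes.trans (hW.subset ⟨hr, h⟩).symm)
      have hS₂' : ∀ f ∈ τ, G.src f ∈ W₂ \ {G.src e} → G.tgt f ∈ W₂ := hes ▸ hS₂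
      exact ((hτ.1 e he).2.resolve_right
        (hτ.tgt_notMem he (hes ▸ Or.inr hs.2) (hes ▸ hs.2) hr₂' hS₂'))
    · exact hS₁ e he ⟨hsrc.1, hes⟩
  refine ⟨_, _, hτ.restrict Set.subset_union_left (fun h => h.2 rfl) hS₁',
    hτ.restrict Set.subset_union_right hr₂ hS₂, ?_⟩
  ext e
  simp only [Finset.mem_union, Finset.mem_filter]
  refine ⟨by rintro (⟨he, -⟩ | ⟨he, -⟩) <;> exact he, fun he => ?_⟩
  obtain ⟨hsrc, hsrcr⟩ := hτ.src_mem he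
  by_cases h₁ : G.src e ∈ W₁
  · exact Or.inl ⟨he, h₁, hsrcr⟩
  · exact Or.inr ⟨he, hsrc.resolve_left h₁, fun h => h₁ (h ▸ hs.1)⟩

end SpanningTree

end Multidigraph

theorem stmt13_general {V E : Type} [DecidableEq E] (G : Multidigraph V E)
    (star : V) (H1 H2 : Set V)
    (hdisj : Disjoint H1 H2)
    (hcover : H1 ∪ H2 ∪ {star} = Set.univ)
    (hsep : ∀ e : E, ¬ (G.src e ∈ H1 ∧ G.tgt e ∈ H2) ∧ ¬ (G.src e ∈ H2 ∧ G.tgt e ∈ H1))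
    (N : V) (hN : N ∈ H1 ∪ {star})
    {R : Type} [CommMonoid R] (π : E → R) :
    Set.BijOn (fun q : Finset E × Finset E => q.1 ∪ q.2)
      {q | G.IsSpanningTreeOn (H1 ∪ {star}) q.1 N ∧
            G.IsSpanningTreeOn (H2 ∪ {star}) q.2 star}
      {τ | G.IsSpanningTree τ N} ∧
    (∀ τ₁ τ₂ : Finset E, G.IsSpanningTreeOn (H1 ∪ {star}) τ₁ N →
      G.IsSpanningTreeOn (H2 ∪ {star}) τ₂ star →
      ∏ e ∈ τ₁ ∪ τ₂, π e = (∏ e ∈ τ₁, π e) * (∏ e ∈ τ₂, π e)) := by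
  have hW : (H1 ∪ {star}) ∩ (H2 ∪ {star}) = {star} := by
    rw [← Set.inter_union_distrib_right, hdisj.inter_eq, Set.empty_union]
  have huniv : (Set.univ : Set V) = (H1 ∪ {star}) ∪ (H2 ∪ {star}) := by
    rw [← hcover, Set.union_union_union_comm, Set.union_self]
  have hsep' (e : E) :
      (G.src e ∈ (H1 ∪ {star}) \ {star} → G.tgt e ∈ H1 ∪ {star}) ∧
        (G.src e ∈ (H2 ∪ {star}) \ {star} → G.tgt e ∈ H2 ∪ {star}) := by
    have htgt : G.tgt e ∈ H1 ∪ H2 ∪ {star} := hcover ▸ Set.mem_univ _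
    have := hsep e
    simp only [Set.mem_sdiff, Set.mem_union, Set.mem_singleton_iff] at htgt this ⊢
    tauto
  have hsrc₂ {τ₂ : Finset E} (h₂ : G.IsSpanningTreeOn (H2 ∪ {star}) τ₂ star) {e : E}
      (he : e ∈ τ₂) : G.src e ∉ H1 ∪ {star} :=
    h₂.src_notMem_of_inter_subset hW.subset he
  refine ⟨⟨?_, ?_, ?_⟩, fun τ₁ τ₂ h₁ h₂ => Finset.prod_union ?_⟩
  · rintro q ⟨h₁, h₂⟩
    show G.IsSpanningTreeOn _ _ N
    exact huniv ▸ h₁.union h₂ hN hW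
  · exact (Finset.injOn_union_of_separated fun e => G.src e ∈ H1 ∪ {star}).mono
      fun q hq => show _ ∧ _ from ⟨fun e he => (hq.1.1 e he).1, fun e he => hsrc₂ hq.2 he⟩
  · intro τ hτ
    replace hτ : G.IsSpanningTreeOn Set.univ τ N := hτ
    rw [huniv] at hτ
    obtain ⟨τ₁, τ₂, h₁, h₂, rfl⟩ :=
      hτ.exists_union_eq hN hW (fun e _ => (hsep' e).1) (fun e _ => (hsep' e).2)
    exact ⟨(τ₁, τ₂), ⟨h₁, h₂⟩, rfl⟩
  · exact Finset.disjoint_left.2 fun e he₁ he₂ => hsrc₂ h₂ he₂ (h₁.1 e he₁).1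

/-- Splitting a rooted spanning tree at a cut node: the map
`(τ₁, τ₂) ↦ τ₁ ∪ τ₂` is a bijection between pairs of a spanning tree of
`G_{H1}` rooted at `N` and a spanning tree of `G_{H2}` rooted at `*`, and the
spanning trees of `G` rooted at `N`; moreover labels multiply. -/
theorem stmt13 {V E : Type} [DecidableEq E] (G : Multidigraph V E)
    (hconn : G.Connected)
    (star : V) (H1 H2 : Set V)
    (hdisj : Disjoint H1 H2) (hstar1 : star ∉ H1) (hstar2 : star ∉ H2)
    (hcover : H1 ∪ H2 ∪ {star} = Set.univ)
    (hsep : ∀ e : E, ¬ (G.src e ∈ H1 ∧ G.tgt e ∈ H2) ∧ ¬ (G.src e ∈ H2 ∧ G.tgt e ∈ H1))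
    (N : V) (hN : N ∈ H1 ∪ {star})
    {R : Type} [CommMonoid R] (π : E → R) :
    Set.BijOn (fun q : Finset E × Finset E => q.1 ∪ q.2)
      {q | G.IsSpanningTreeOn (H1 ∪ {star}) q.1 N ∧
            G.IsSpanningTreeOn (H2 ∪ {star}) q.2 star}
      {τ | G.IsSpanningTree τ N} ∧
    (∀ τ₁ τ₂ : Finset E, G.IsSpanningTreeOn (H1 ∪ {star}) τ₁ N →
      G.IsSpanningTreeOn (H2 ∪ {star}) τ₂ star →
      ∏ e ∈ τ₁ ∪ τ₂, π e = (∏ e ∈ τ₁, π e) * (∏ e ∈ τ₂, π e)) :=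
  stmt13_general G star H1 H2 hdisj hcover hsep N hN π
end

section
/- (Reduced ODE identity.) Let G_U be a connected labeled multidigraph (containing node * with defining function q(x) = 1/Σ_{τ∈Θ(*)} π(τ)). For each edge e let w_e ∈ ℝ^p be an associated vector (the projected reaction vector ζ(y'_{r(e)} − y_{r(e)})). Then Σ_{e ∈ G_U} (Σ_{τ ∈ Θ(s(e))} π(τ)) π(e) w_e = Σ_{σ cycle of G_U} Π(σ) Σ_{e∈σ} w_e, where Π(σ) = Σ_{γ ∈ Γ(σ)} π(γ) and Γ(σ) is the set of subgraphs τ ∪ {e} with e ∈ σ and τ a spanning tree rooted at s(e) containing σ∖{e}. -/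
open scoped Classical

/-!
Adding an edge `e` to a spanning tree `τ` rooted at `s(e)` gives a functional subgraph
`δ = τ ∪ {e}` (every node has exactly one outgoing edge), whose unique cycle `γ` passes through
`e`; conversely, deleting any edge `e` of that cycle from `δ` leaves a spanning tree rooted at
`s(e)`. Hence `(e, τ) ↦ (γ, δ, e)` is a bijection onto the triples with `γ` a cycle, `δ ∈ Γ(γ)`
and `e ∈ γ`, and as `π(δ) = π(τ) π(e)` both sides of the identity are the same sum over it.
The cycle of `δ` through `e` is recovered choice-free as the set of edges of `δ` whose source is
reachable from `s(e)` inside `δ`.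
-/

open Finset Relation

namespace Multidigraph

variable {V E : Type*} {G : Multidigraph V E}

lemma exists_iterate_eq_of_reflTransGen {α : Type*} {r : α → α → Prop} {f : α → α}
    (hf : ∀ a b, r a b → b = f a) {a b : α} (h : ReflTransGen r a b) : ∃ k, f^[k] a = b := by
  induction h using ReflTransGen.head_induction_on with
  | refl => exact ⟨0, rfl⟩
  | head hac _ ih =>
    obtain ⟨k, hk⟩ := ih
    exact ⟨k + 1, by rw [Function.iterate_succ_apply, ← hf _ _ hac, hk]⟩

lemma rel_mono {s t : Set E} (h : s ⊆ t) : G.Rel s ≤ G.Rel t :=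
  fun _ _ ⟨e, he, hab⟩ => ⟨e, h he, hab⟩

noncomputable def reachableEdges (G : Multidigraph V E) (δ : Finset E) (r : V) : Finset E :=
  δ.filter fun f => ReflTransGen (G.Rel ↑δ) r (G.src f)

def IsFunctional (G : Multidigraph V E) (δ : Finset E) : Prop :=
  ∀ v, ∃! f, f ∈ δ ∧ G.src f = v

lemma IsFunctional.injOn_src {δ : Finset E} (hδ : G.IsFunctional δ) : Set.InjOn G.src ↑δ :=
  fun _ hf g hg hfg => (hδ (G.src g)).unique ⟨hf, hfg⟩ ⟨hg, rfl⟩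

namespace IsCycle

variable {l : List E} (hl : G.IsCycle l)
include hl

lemma tgt_getElem (i : ℕ) (hi : i < l.length) :
    G.tgt l[i] = G.src (l[(i + 1) % l.length]'(Nat.mod_lt _ (by omega))) := by
  obtain ⟨hne, -, hchain, hclose⟩ := hl
  rcases Nat.lt_or_ge (i + 1) l.length with h | h
  · rw [List.isChain_iff_getElem.mp hchain i h]
    simp only [Nat.mod_eq_of_lt h]
  · obtain rfl : i = l.length - 1 := by omega
    rw [getElem_congr_idx (show (l.length - 1 + 1) % l.length = 0 by
      rw [Nat.sub_add_cancel (by omega : 1 ≤ l.length), Nat.mod_self])]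
    simpa [List.getLast_eq_getElem, List.head_eq_getElem] using hclose hne

lemma exists_src_eq_tgt {g : E} (hg : g ∈ l) : ∃ g' ∈ l, G.src g' = G.tgt g := by
  obtain ⟨i, hi, rfl⟩ := List.mem_iff_getElem.mp hg
  exact ⟨_, List.getElem_mem _, (hl.tgt_getElem i hi).symm⟩

lemma reflTransGen_src {f g : E} (hf : f ∈ l) (hg : g ∈ l) :
    ReflTransGen (G.Rel ↑l.toFinset) (G.src f) (G.src g) := by
  obtain ⟨i, hi, rfl⟩ := List.mem_iff_getElem.mp hf
  obtain ⟨j, hj, rfl⟩ := List.mem_iff_getElem.mp hg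
  have walk : ∀ k, ReflTransGen (G.Rel ↑l.toFinset) (G.src l[i])
      (G.src (l[(i + k) % l.length]'(Nat.mod_lt _ (by omega)))) := by
    intro k
    induction k with
    | zero => simp only [Nat.add_zero, Nat.mod_eq_of_lt hi, ReflTransGen.refl]
    | succ k ih =>
      refine ih.tail ⟨_, by simp, rfl, ?_⟩
      rw [hl.tgt_getElem _ (Nat.mod_lt _ (by omega))]
      congr 2
      rw [Nat.mod_add_mod, Nat.add_assoc]
  have hidx : (i + (l.length + j - i)) % l.length = j := by
    rw [show i + (l.length + j - i) = j + l.length by omega, Nat.add_mod_right,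
      Nat.mod_eq_of_lt hj]
  simpa only [getElem_congr_idx hidx] using walk (l.length + j - i)

lemma toFinset_eq_reachableEdges {δ : Finset E} (hδ : Set.InjOn G.src ↑δ)
    (hsub : l.toFinset ⊆ δ) {e : E} (he : e ∈ l) :
    l.toFinset = G.reachableEdges δ (G.src e) := by
  ext f
  simp only [reachableEdges, mem_filter, List.mem_toFinset]
  constructor
  · intro hf
    exact ⟨hsub (List.mem_toFinset.mpr hf),
      ReflTransGen.mono (rel_mono (coe_subset.mpr hsub)) _ _ (hl.reflTransGen_src he hf)⟩
  · rintro ⟨hfδ, hreach⟩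
    have closed : ∀ v, ReflTransGen (G.Rel ↑δ) (G.src e) v → ∃ g ∈ l, G.src g = v := by
      intro v hv
      induction hv with
      | refl => exact ⟨e, he, rfl⟩
      | tail _ hstep ih =>
        obtain ⟨g, hg, rfl⟩ := ih
        obtain ⟨f', hf', hsrc, rfl⟩ := hstep
        obtain rfl := hδ hf' (hsub (List.mem_toFinset.mpr hg)) hsrc
        exact hl.exists_src_eq_tgt hg
    obtain ⟨g, hg, hgf⟩ := closed _ hreach
    rwa [hδ hfδ (hsub (List.mem_toFinset.mpr hg)) hgf.symm]

end IsCycle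

lemma IsFunctional.exists_isCycle {δ : Finset E} (hδ : G.IsFunctional δ) {e : E} (he : e ∈ δ)
    (hret : ReflTransGen (G.Rel ↑δ) (G.tgt e) (G.src e)) :
    ∃ l, G.IsCycle l ∧ l.toFinset ⊆ δ ∧ e ∈ l := by
  choose edge hedge using fun v => (hδ v).exists
  set next : V → V := fun v => G.tgt (edge v)
  have hedge_e : edge (G.src e) = e := hδ.injOn_src (hedge _).1 he (hedge _).2
  have hstep : ∀ a b, G.Rel ↑δ a b → b = next a := by
    rintro a _ ⟨f, hf, rfl, rfl⟩
    show G.tgt f = G.tgt (edge (G.src f))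
    rw [hδ.injOn_src (hedge (G.src f)).1 hf (hedge _).2]
  set r := G.src e
  -- the cycle is the periodic orbit of `r` under `next`
  obtain ⟨k, hk⟩ := exists_iterate_eq_of_reflTransGen hstep hret
  have hr : r ∈ Function.periodicPts next :=
    ⟨k + 1, k.succ_pos, by rw [Function.IsPeriodicPt, Function.IsFixedPt,
      Function.iterate_succ_apply, show next r = G.tgt e by simp [next, r, hedge_e], hk]⟩
  set m := Function.minimalPeriod next r
  have hm : 0 < m := Function.minimalPeriod_pos_of_mem_periodicPts hr
  set orbit := (List.range m).map fun i => next^[i] r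
  have hsrc : (orbit.map edge).map G.src = orbit := by
    rw [List.map_map, show G.src ∘ edge = id from funext fun v => (hedge v).2, List.map_id]
  refine ⟨orbit.map edge, ⟨?_, ?_, ?_, fun _ => ?_⟩, ?_, ?_⟩
  · simp [orbit, m, hm.ne']
  · rw [hsrc, ← Cycle.nodup_coe_iff]
    exact Function.nodup_periodicOrbit
  · show List.IsChain _ _
    simp only [orbit, List.map_map, List.isChain_map, List.isChain_range]
    intro i _
    simp [(hedge _).2, next, Function.iterate_succ_apply']
  · simp only [orbit, List.range_map_iterate, List.getLast_eq_getElem, List.head_eq_getElem,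
      List.length_map, List.length_iterate, List.getElem_map, List.getElem_iterate,
      Function.iterate_zero, id_eq, (hedge _).2]
    change next (next^[m - 1] r) = r
    rw [← Function.iterate_succ_apply' next, Nat.succ_eq_add_one, Nat.sub_add_cancel hm]
    exact Function.isPeriodicPt_minimalPeriod next r
  · intro f hf
    obtain ⟨v, -, rfl⟩ := List.mem_map.mp (List.mem_toFinset.mp hf)
    exact (hedge v).1
  · exact List.mem_map.mpr ⟨r, List.mem_map.mpr ⟨0, List.mem_range.mpr hm, rfl⟩, hedge_e⟩

lemma IsFunctional.isSpanningTree_erase {δ : Finset E} (hδ : G.IsFunctional δ) {e : E}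
    (he : e ∈ δ) (hreach : ∀ v, ReflTransGen (G.Rel ↑δ) v (G.src e)) :
    G.IsSpanningTree (δ.erase e) (G.src e) := by
  have hreach' : ∀ v, ReflTransGen (G.Rel ↑(δ.erase e)) v (G.src e) := by
    intro v
    induction hreach v using ReflTransGen.head_induction_on with
    | refl => exact .refl
    | head hstep _ ih =>
      obtain ⟨f, hf, rfl, rfl⟩ := hstep
      by_cases hfe : f = e
      · exact hfe ▸ .refl
      · exact .head ⟨f, mem_erase.mpr ⟨hfe, hf⟩, rfl, rfl⟩ ih
  refine ⟨fun _ _ => ⟨trivial, trivial⟩, fun v _ hv => ?_, fun f hf hfs => ?_, fun v _ => hreach' v⟩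
  · obtain ⟨f, ⟨hf, rfl⟩, huniq⟩ := hδ v
    exact ⟨f, ⟨mem_erase.mpr ⟨fun hfe => hv (hfe ▸ rfl), hf⟩, rfl⟩,
      fun g ⟨hg, hgs⟩ => huniq g ⟨mem_of_mem_erase hg, hgs⟩⟩
  · exact (mem_erase.mp hf).1 (hδ.injOn_src (mem_of_mem_erase hf) he hfs)

namespace IsSpanningTree

variable {τ : Finset E} {e : E} (hτ : G.IsSpanningTree τ (G.src e))
include hτ

lemma notMem : e ∉ τ :=
  fun he => hτ.2.2.1 e he rfl

lemma isFunctional_insert : G.IsFunctional (insert e τ) := by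
  intro v
  by_cases hv : v = G.src e
  · subst hv
    refine ⟨e, ⟨mem_insert_self e τ, rfl⟩, fun f ⟨hf, hfs⟩ => ?_⟩
    exact (mem_insert.mp hf).resolve_right fun hfτ => hτ.2.2.1 f hfτ hfs
  · obtain ⟨f, ⟨hfτ, hfs⟩, huniq⟩ := hτ.2.1 v (Set.mem_univ v) hv
    refine ⟨f, ⟨mem_insert_of_mem hfτ, hfs⟩, fun g ⟨hg, hgs⟩ => ?_⟩
    rcases mem_insert.mp hg with rfl | hg
    · exact absurd hgs.symm hv
    · exact huniq g ⟨hg, hgs⟩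

lemma reflTransGen_insert (v : V) : ReflTransGen (G.Rel ↑(insert e τ)) v (G.src e) :=
  ReflTransGen.mono (rel_mono (coe_subset.mpr (subset_insert e τ))) _ _
    (hτ.2.2.2 v (Set.mem_univ v))

lemma exists_isCycle_toFinset_eq :
    ∃ l, G.IsCycle l ∧ l.toFinset = G.reachableEdges (insert e τ) (G.src e) := by
  have hδ := hτ.isFunctional_insert
  obtain ⟨l, hl, hsub, hel⟩ :=
    hδ.exists_isCycle (mem_insert_self e τ) (hτ.reflTransGen_insert _)
  exact ⟨l, hl, hl.toFinset_eq_reachableEdges hδ.injOn_src hsub hel⟩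

end IsSpanningTree

section Finite

variable [Fintype E]

noncomputable def spanningTrees (G : Multidigraph V E) (r : V) : Finset (Finset E) :=
  univ.filter fun τ => G.IsSpanningTree τ r

noncomputable def cycleEdgeSets (G : Multidigraph V E) : Finset (Finset E) :=
  univ.filter fun γ => ∃ l, G.IsCycle l ∧ l.toFinset = γ

/-- `Γ(γ)` in the paper's notation. -/
noncomputable def spanningUnicyclic (G : Multidigraph V E) (γ : Finset E) : Finset (Finset E) :=
  univ.filter fun δ => ∃ e ∈ γ, ∃ τ, G.IsSpanningTree τ (G.src e) ∧ γ.erase e ⊆ τ ∧ δ = insert e τ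

lemma isSpanningTree_erase_of_mem_spanningUnicyclic {γ δ : Finset E} {e : E}
    (hγ : γ ∈ G.cycleEdgeSets) (hδ : δ ∈ G.spanningUnicyclic γ) (he : e ∈ γ) :
    G.IsSpanningTree (δ.erase e) (G.src e) ∧ e ∈ δ ∧ G.reachableEdges δ (G.src e) = γ := by
  obtain ⟨l, hl, rfl⟩ := (mem_filter.mp hγ).2
  obtain ⟨e₀, he₀, τ, hτ, hsub, rfl⟩ := (mem_filter.mp hδ).2
  have hfun := hτ.isFunctional_insert
  have hlδ : l.toFinset ⊆ insert e₀ τ := subset_insert_iff.mpr hsub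
  have hcyc := hl.reflTransGen_src (List.mem_toFinset.mp he₀) (List.mem_toFinset.mp he)
  refine ⟨hfun.isSpanningTree_erase (hlδ he) fun v => (hτ.reflTransGen_insert v).trans ?_,
    hlδ he, (hl.toFinset_eq_reachableEdges hfun.injOn_src hlδ (List.mem_toFinset.mp he)).symm⟩
  exact ReflTransGen.mono (rel_mono (coe_subset.mpr hlδ)) _ _ hcyc

theorem sum_spanningTrees_eq_sum_cycleEdgeSets {M : Type*} [AddCommMonoid M]
    (F : E → Finset E → M) :
    ∑ e, ∑ τ ∈ G.spanningTrees (G.src e), F e (insert e τ) =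
      ∑ γ ∈ G.cycleEdgeSets, ∑ δ ∈ G.spanningUnicyclic γ, ∑ e ∈ γ, F e δ := by
  simp_rw [← sum_product', sum_sigma']
  refine sum_nbij'
    (fun x => ⟨G.reachableEdges (insert x.1 x.2) (G.src x.1), insert x.1 x.2, x.1⟩)
    (fun y => ⟨y.2.2, y.2.1.erase y.2.2⟩) ?_ ?_ ?_ ?_ fun _ _ => rfl
  · rintro ⟨e, τ⟩ hx
    have hτ : G.IsSpanningTree τ (G.src e) := (mem_filter.mp (mem_sigma.mp hx).2).2
    have he : e ∈ G.reachableEdges (insert e τ) (G.src e) :=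
      mem_filter.mpr ⟨mem_insert_self e τ, .refl⟩
    refine mem_sigma.mpr ⟨mem_filter.mpr ⟨mem_univ _, ?_⟩, mem_product.mpr ⟨?_, he⟩⟩
    · exact hτ.exists_isCycle_toFinset_eq
    · exact mem_filter.mpr ⟨mem_univ _, e, he, τ, hτ, subset_insert_iff.mp (filter_subset _ _), rfl⟩
  · rintro ⟨γ, δ, e⟩ hy
    obtain ⟨hγ, hy⟩ := mem_sigma.mp hy
    obtain ⟨hδ, he⟩ := mem_product.mp hy
    exact mem_sigma.mpr ⟨mem_univ _, mem_filter.mpr ⟨mem_univ _,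
      (isSpanningTree_erase_of_mem_spanningUnicyclic hγ hδ he).1⟩⟩
  · rintro ⟨e, τ⟩ hx
    simp only [erase_insert (mem_filter.mp (mem_sigma.mp hx).2).2.notMem]
  · rintro ⟨γ, δ, e⟩ hy
    obtain ⟨hγ, hy⟩ := mem_sigma.mp hy
    obtain ⟨hδ, he⟩ := mem_product.mp hy
    obtain ⟨-, heδ, hreach⟩ := isSpanningTree_erase_of_mem_spanningUnicyclic hγ hδ he
    simp only [insert_erase heδ, hreach]

end Finite

end Multidigraph

theorem stmt16_general {V E : Type} [Fintype E] (G : Multidigraph V E)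
    {R : Type} [CommRing R] (π : E → R) {p : ℕ} (w : E → (Fin p → R)) :
    ∑ e : E,
        ((∑ τ ∈ Finset.univ.filter (fun τ : Finset E => G.IsSpanningTree τ (G.src e)),
            ∏ f ∈ τ, π f) * π e) • w e
      = ∑ γ ∈ Finset.univ.filter
            (fun γ : Finset E => ∃ l : List E, G.IsCycle l ∧ l.toFinset = γ),
          (∑ δ ∈ Finset.univ.filter (fun δ : Finset E =>
              ∃ e ∈ γ, ∃ τ : Finset E, G.IsSpanningTree τ (G.src e) ∧
                γ.erase e ⊆ τ ∧ δ = insert e τ),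
            ∏ f ∈ δ, π f) • (∑ e ∈ γ, w e) := by
  simp only [sum_mul, sum_smul]
  simp only [smul_sum]
  refine Eq.trans ?_ (G.sum_spanningTrees_eq_sum_cycleEdgeSets fun e δ => (∏ f ∈ δ, π f) • w e)
  refine sum_congr rfl fun e _ => sum_congr rfl fun τ hτ => ?_
  rw [prod_insert (mem_filter.mp hτ).2.notMem, mul_comm]

/-- Reduced ODE identity: summing the tree-weighted, labeled
reaction vectors over all edges equals summing `Π(σ)`-weighted net reaction
vectors over all cycles (cycles represented by their edge sets). -/
theorem stmt16 {V E : Type} [Fintype V] [Fintype E] (G : Multidigraph V E)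
    (hconn : G.Connected)
    {R : Type} [CommRing R] (π : E → R) {p : ℕ} (w : E → (Fin p → R)) :
    ∑ e : E,
        ((∑ τ ∈ Finset.univ.filter (fun τ : Finset E => G.IsSpanningTree τ (G.src e)),
            ∏ f ∈ τ, π f) * π e) • w e
      = ∑ γ ∈ Finset.univ.filter
            (fun γ : Finset E => ∃ l : List E, G.IsCycle l ∧ l.toFinset = γ),
          (∑ δ ∈ Finset.univ.filter (fun δ : Finset E =>
              ∃ e ∈ γ, ∃ τ : Finset E, G.IsSpanningTree τ (G.src e) ∧
                γ.erase e ⊆ τ ∧ δ = insert e τ),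
            ∏ f ∈ δ, π f) • (∑ e ∈ γ, w e) :=
  stmt16_general G π w
end
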